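/- arXiv:2012.10111 — 4 statements merged into one kernel-verified Lean document; each statement's English description precedes it below -/
import Mathlib

section
/- Let K be a positive integer, let P > 0 and σ² > 0 be real numbers, and for k = 1,…,K let w_k ≥ 0, H_k ≥ 0 and r_k ≥ 0 be real numbers. Define S_k = ∑_{j=k+1}^{K} w_j · P · H_j + σ² (so S_K = σ²). If w_k · P · H_k ≥ r_k · S_k for every k = 1,…,K, then for every k = 0,1,…,K one has S_k ≥ σ² · ∏_{j=k+1}^{K} (r_j + 1). -/
/-! Peeling off the first device gives `S k = w (k+1) P H (k+1) + S (k+1) ≥ (r (k+1) + 1) S (k+1)`,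
and iterating this down from `S K = σ²` yields the product bound. -/

open Finset

@[to_additive]
theorem Finset.prod_Icc_eq_mul_prod_Icc_succ {M : Type*} [CommMonoid M] {a b : ℕ}
    (hab : a ≤ b) (f : ℕ → M) :
    ∏ k ∈ Icc a b, f k = f a * ∏ k ∈ Icc (a + 1) b, f k := by
  rw [Icc_eq_cons_Ioc hab, prod_cons, Icc_add_one_left_eq_Ioc]

theorem mul_prod_Icc_le_of_mul_le {R : Type*} [CommSemiring R] [PartialOrder R] [IsOrderedRing R]
    {S c : ℕ → R} {K : ℕ} {b : R} (hc : ∀ k < K, 0 ≤ c (k + 1))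
    (hstep : ∀ k < K, c (k + 1) * S (k + 1) ≤ S k) (hb : b ≤ S K) {k : ℕ} (hk : k ≤ K) :
    b * ∏ j ∈ Icc (k + 1) K, c j ≤ S k := by
  induction hk using Nat.decreasingInduction with
  | self => simpa using hb
  | of_succ k hk ih =>
    calc b * ∏ j ∈ Icc (k + 1) K, c j = c (k + 1) * (b * ∏ j ∈ Icc (k + 1 + 1) K, c j) := by
          rw [prod_Icc_eq_mul_prod_Icc_succ hk]; ring
      _ ≤ c (k + 1) * S (k + 1) := mul_le_mul_of_nonneg_left ih (hc k hk)
      _ ≤ S k := hstep k hk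

theorem interference_lower_bound_general (K : ℕ) (P σ2 : ℝ)
    (w H r : ℕ → ℝ) (hr : ∀ k, 0 ≤ r k)
    (S : ℕ → ℝ)
    (hS : ∀ k, S k = (∑ j ∈ Finset.Icc (k + 1) K, w j * P * H j) + σ2)
    (hcon : ∀ k ∈ Finset.Icc 1 K, w k * P * H k ≥ r k * S k) :
    ∀ k ≤ K, S k ≥ σ2 * ∏ j ∈ Finset.Icc (k + 1) K, (r j + 1) := by
  have hS_succ : ∀ k < K, S k = w (k + 1) * P * H (k + 1) + S (k + 1) := by
    intro k hk
    rw [hS k, hS (k + 1), sum_Icc_eq_add_sum_Icc_succ hk]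
    ring
  intro k hk
  refine mul_prod_Icc_le_of_mul_le (fun j _ => by linarith [hr (j + 1)]) (fun j hj => ?_) ?_ hk
  · have := hcon (j + 1) (mem_Icc.mpr ⟨j.succ_pos, hj⟩)
    rw [hS_succ j hj]
    linarith
  · simp [hS K]

/-- Key induction behind eq. (11): lower bound on interference-plus-noise power at stage k. -/
theorem interference_lower_bound (K : ℕ) (hK : 0 < K) (P σ2 : ℝ) (hP : 0 < P) (hσ : 0 < σ2)
    (w H r : ℕ → ℝ) (hw : ∀ k, 0 ≤ w k) (hH : ∀ k, 0 ≤ H k) (hr : ∀ k, 0 ≤ r k)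
    (S : ℕ → ℝ)
    (hS : ∀ k, S k = (∑ j ∈ Finset.Icc (k + 1) K, w j * P * H j) + σ2)
    (hcon : ∀ k ∈ Finset.Icc 1 K, w k * P * H k ≥ r k * S k) :
    ∀ k ≤ K, S k ≥ σ2 * ∏ j ∈ Finset.Icc (k + 1) K, (r j + 1) :=
  interference_lower_bound_general K P σ2 w H r hr S hS hcon
end

section
/- Let K be a positive integer, let P > 0 and σ² > 0 be real numbers, and for k = 1,…,K let w_k ≥ 0, H_k > 0 and r_k ≥ 0 be real numbers. If w_k · P · H_k ≥ r_k · ( ∑_{j=k+1}^{K} w_j · P · H_j + σ² ) for every k = 1,…,K, then for every k, w_k ≥ ( σ² · r_k / (P · H_k) ) · ∏_{j=k+1}^{K} (r_j + 1). -/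
/-!
With the tail sums `S k = ∑_{j=k}^{K} w j P H j + σ²`, the constraint `w k P H k ≥ r k S (k+1)`
reads `S k ≥ (r k + 1) S (k+1)`. Downward induction from `S (K+1) = σ²` gives
`S (k+1) ≥ σ² ∏_{j=k+1}^{K} (r j + 1)`; feeding this back into the constraint and dividing by
`P H k > 0` gives the bound.
-/

open Finset

theorem mul_prod_add_one_le_sum_Icc_add {a r : ℕ → ℝ} {c : ℝ} {m K : ℕ} (hr : ∀ k, 0 ≤ r k)
    (h : ∀ k ∈ Icc m K, r k * (∑ j ∈ Icc (k + 1) K, a j + c) ≤ a k)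
    {k : ℕ} (hmk : m ≤ k) (hkK : k ≤ K + 1) :
    c * ∏ j ∈ Icc k K, (r j + 1) ≤ ∑ j ∈ Icc k K, a j + c := by
  refine Nat.decreasingInduction' (fun i hi hki ih => ?_) hkK (by simp)
  have hiK : i ≤ K := Nat.lt_succ_iff.mp hi
  rw [← insert_Icc_add_one_left_eq_Icc hiK, sum_insert (by simp), prod_insert (by simp)]
  calc c * ((r i + 1) * ∏ j ∈ Icc (i + 1) K, (r j + 1))
      = (r i + 1) * (c * ∏ j ∈ Icc (i + 1) K, (r j + 1)) := by ring
    _ ≤ (r i + 1) * (∑ j ∈ Icc (i + 1) K, a j + c) :=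
      mul_le_mul_of_nonneg_left ih (by linarith [hr i])
    _ ≤ a i + ∑ j ∈ Icc (i + 1) K, a j + c := by
      linarith [h i (mem_Icc.mpr ⟨hmk.trans hki, hiK⟩)]

theorem power_reflection_lower_bound_general (K : ℕ) (P σ2 : ℝ) (hP : 0 < P)
    (w H r : ℕ → ℝ) (hH : ∀ k, 0 < H k) (hr : ∀ k, 0 ≤ r k)
    (hcon : ∀ k ∈ Finset.Icc 1 K, w k * P * H k ≥
      r k * ((∑ j ∈ Finset.Icc (k + 1) K, w j * P * H j) + σ2)) :
    ∀ k ∈ Finset.Icc 1 K,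
      w k ≥ (σ2 * r k / (P * H k)) * ∏ j ∈ Finset.Icc (k + 1) K, (r j + 1) := by
  intro k hk
  have hkK : k ≤ K := (mem_Icc.mp hk).2
  have htail : σ2 * ∏ j ∈ Icc (k + 1) K, (r j + 1) ≤ ∑ j ∈ Icc (k + 1) K, w j * P * H j + σ2 :=
    mul_prod_add_one_le_sum_Icc_add hr hcon (by omega) (by omega)
  rw [ge_iff_le, div_mul_eq_mul_div, div_le_iff₀ (mul_pos hP (hH k))]
  calc σ2 * r k * ∏ j ∈ Icc (k + 1) K, (r j + 1)
      = r k * (σ2 * ∏ j ∈ Icc (k + 1) K, (r j + 1)) := by ring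
    _ ≤ r k * (∑ j ∈ Icc (k + 1) K, w j * P * H j + σ2) := mul_le_mul_of_nonneg_left htail (hr k)
    _ ≤ w k * (P * H k) := by linarith [hcon k hk]

/-- Eq. (11): QoS constraints force each power reflection coefficient above its lower bound. -/
theorem power_reflection_lower_bound (K : ℕ) (hK : 0 < K) (P σ2 : ℝ) (hP : 0 < P) (hσ : 0 < σ2)
    (w H r : ℕ → ℝ) (hw : ∀ k, 0 ≤ w k) (hH : ∀ k, 0 < H k) (hr : ∀ k, 0 ≤ r k)
    (hcon : ∀ k ∈ Finset.Icc 1 K, w k * P * H k ≥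
      r k * ((∑ j ∈ Finset.Icc (k + 1) K, w j * P * H j) + σ2)) :
    ∀ k ∈ Finset.Icc 1 K,
      w k ≥ (σ2 * r k / (P * H k)) * ∏ j ∈ Finset.Icc (k + 1) K, (r j + 1) :=
  power_reflection_lower_bound_general K P σ2 hP w H r hH hr hcon
end

section
/- Let K be a positive integer, let P > 0 and σ² > 0 be real numbers, and for k = 1,…,K let H_k > 0 and r_k ≥ 0 be real numbers. Define w_k^LB = ( σ² · r_k / (P · H_k) ) · ∏_{j=k+1}^{K} (r_j + 1). Then the point w_k = w_k^LB satisfies every quality-of-service constraint with equality: for every k = 1,…,K, w_k^LB · P · H_k = r_k · ( ∑_{j=k+1}^{K} w_j^LB · P · H_j + σ² ). -/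
/-! At `w = w^LB` the received power `w_j P H_j` is `σ² r_j ∏_{i>j} (1 + r_i)`, so the interference
seen by device `k` is `σ² (∏_{i>k} (1 + r_i) - 1)`: expand the product according to the first
index at which `r_i` is chosen over `1`. Adding the noise `σ²` leaves `σ² ∏_{i>k} (1 + r_i)`, and
`r_k` times this is `w_k P H_k`. -/

open Finset

theorem Finset.prod_one_add_Icc {R : Type*} [CommSemiring R] (f : ℕ → R) (a b : ℕ) :
    ∏ i ∈ Icc a b, (1 + f i) = 1 + ∑ i ∈ Icc a b, f i * ∏ j ∈ Icc (i + 1) b, (1 + f j) := by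
  -- `prod_one_add_ordered` on `ℕᵒᵈ`, so that the remaining factors are the later indices
  have h := prod_one_add_ordered (ι := ℕᵒᵈ) ((Icc a b).map OrderDual.toDual.toEmbedding)
    (f ∘ OrderDual.ofDual)
  simp only [filter_map, prod_map, sum_map, Function.comp_def, Equiv.coe_toEmbedding,
    OrderDual.ofDual_toDual, OrderDual.toDual_lt_toDual] at h
  rw [h]
  refine congrArg (1 + ·) (sum_congr rfl fun i hi => ?_)
  have : {j ∈ Icc a b | i < j} = Icc (i + 1) b := by
    ext j; simp only [mem_filter, mem_Icc] at hi ⊢; omega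
  rw [this]

theorem lower_bounds_tight_general (K : ℕ) (P σ2 : ℝ) (hP : 0 < P)
    (H r : ℕ → ℝ) (hH : ∀ k, 0 < H k)
    (wLB : ℕ → ℝ)
    (hwLB : ∀ k, wLB k =
      (σ2 * r k / (P * H k)) * ∏ j ∈ Finset.Icc (k + 1) K, (r j + 1)) :
    ∀ k ∈ Finset.Icc 1 K,
      wLB k * P * H k =
        r k * ((∑ j ∈ Finset.Icc (k + 1) K, wLB j * P * H j) + σ2) := by
  intro k _
  have hterm (j : ℕ) : wLB j * P * H j = σ2 * (r j * ∏ i ∈ Icc (j + 1) K, (1 + r i)) := by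
    rw [hwLB j]
    field_simp [hP.ne', (hH j).ne']
    simp only [add_comm (r _) 1]
  simp only [hterm, ← mul_sum]
  linear_combination σ2 * r k * prod_one_add_Icc r (k + 1) K

/-- Tightness of the lower bounds of eq. (11): at w = w^LB every QoS constraint is an equality. -/
theorem lower_bounds_tight (K : ℕ) (hK : 0 < K) (P σ2 : ℝ) (hP : 0 < P) (hσ : 0 < σ2)
    (H r : ℕ → ℝ) (hH : ∀ k, 0 < H k) (hr : ∀ k, 0 ≤ r k)
    (wLB : ℕ → ℝ)
    (hwLB : ∀ k, wLB k =
      (σ2 * r k / (P * H k)) * ∏ j ∈ Finset.Icc (k + 1) K, (r j + 1)) :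
    ∀ k ∈ Finset.Icc 1 K,
      wLB k * P * H k =
        r k * ((∑ j ∈ Finset.Icc (k + 1) K, wLB j * P * H j) + σ2) :=
  lower_bounds_tight_general K P σ2 hP H r hH wLB hwLB
end

section
/- Let K be a positive integer, let P > 0 and σ² > 0 be real numbers, and for k = 1,…,K let H_k ≥ 0 and r_k ≥ 0 be real numbers. Suppose w = (w_1,…,w_K) ∈ [0,1]^K satisfies w_k · P · H_k ≥ r_k · ( ∑_{j=k+1}^{K} w_j · P · H_j + σ² ) for every k. Define w' by w'_1 = 1 and w'_k = w_k for k ≥ 2. Then w' ∈ [0,1]^K, w' also satisfies all the constraints w'_k · P · H_k ≥ r_k · ( ∑_{j=k+1}^{K} w'_j · P · H_j + σ² ), and ∑_{k=1}^{K} w'_k · H_k ≥ ∑_{k=1}^{K} w_k · H_k. Consequently, if the feasible set is nonempty, the maximum of ∑_{k=1}^{K} w_k H_k over the feasible set is attained at a point with w_1 = 1. -/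
/-!
Device 1 is decoded first, so `w₁` occurs in no interference term: the constraint of device `k`
only involves `w_j` for `j ≥ k`. Raising `w₁` to `1` therefore only strengthens the first
constraint and leaves the others untouched, while it can only increase the objective. The maximum
itself exists because the feasible set, cut down to the coordinates `1, …, K`, is compact.
-/

/-- Feasibility for the power reflection coefficient optimization problem:
w ∈ [0,1]^K together with the QoS constraints. -/
def Feasible (K : ℕ) (P σ2 : ℝ) (H r : ℕ → ℝ) (w : ℕ → ℝ) : Prop :=
  (∀ k ∈ Finset.Icc 1 K, 0 ≤ w k ∧ w k ≤ 1) ∧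
  (∀ k ∈ Finset.Icc 1 K,
    w k * P * H k ≥ r k * ((∑ j ∈ Finset.Icc (k + 1) K, w j * P * H j) + σ2))

open Finset

section Feasible

variable {K : ℕ} {P σ2 : ℝ} {H r : ℕ → ℝ}

theorem feasible_congr {w v : ℕ → ℝ} (h : ∀ k ∈ Icc 1 K, w k = v k) :
    Feasible K P σ2 H r w ↔ Feasible K P σ2 H r v := by
  have htail : ∀ k ∈ Icc 1 K,
      ∑ j ∈ Icc (k + 1) K, w j * P * H j = ∑ j ∈ Icc (k + 1) K, v j * P * H j := by
    intro k hk
    refine sum_congr rfl fun j hj => ?_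
    rw [h j (Icc_subset_Icc (by simp at hk; omega) le_rfl hj)]
  unfold Feasible
  constructor
  · rintro ⟨hbox, hqos⟩
    exact ⟨fun k hk => h k hk ▸ hbox k hk, fun k hk => h k hk ▸ htail k hk ▸ hqos k hk⟩
  · rintro ⟨hbox, hqos⟩
    exact ⟨fun k hk => (h k hk).symm ▸ hbox k hk,
      fun k hk => (h k hk).symm ▸ (htail k hk).symm ▸ hqos k hk⟩

theorem isClosed_setOf_feasible : IsClosed {w : ℕ → ℝ | Feasible K P σ2 H r w} := by
  simp only [Feasible, Set.ofPred_and, Set.ofPred_forall]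
  refine .inter (isClosed_biInter fun k _ => .inter ?_ ?_) (isClosed_biInter fun k _ => ?_)
  all_goals exact isClosed_le (by fun_prop) (by fun_prop)

theorem sum_Icc_succ_ite_one (w : ℕ → ℝ) (c : ℕ → ℝ) {k : ℕ} (hk : 1 ≤ k) :
    ∑ j ∈ Icc (k + 1) K, (if j = 1 then 1 else w j) * c j = ∑ j ∈ Icc (k + 1) K, w j * c j :=
  sum_congr rfl fun j hj => by rw [if_neg (by simp at hj; omega)]

theorem Feasible.ite_one (hP : 0 ≤ P) (hH₁ : 0 ≤ H 1) {w : ℕ → ℝ}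
    (hw : Feasible K P σ2 H r w) :
    Feasible K P σ2 H r (fun k => if k = 1 then 1 else w k) := by
  obtain ⟨hbox, hqos⟩ := hw
  refine ⟨fun k hk => ?_, fun k hk => ?_⟩ <;> dsimp only
  · split_ifs
    · exact ⟨zero_le_one, le_rfl⟩
    · exact hbox k hk
  · have hk1 : 1 ≤ k := (mem_Icc.mp hk).1
    simp only [mul_assoc, sum_Icc_succ_ite_one w _ hk1]
    split_ifs with h
    · subst h
      calc 1 * (P * H 1) ≥ w 1 * (P * H 1) :=
            mul_le_mul_of_nonneg_right (hbox 1 hk).2 (mul_nonneg hP hH₁)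
        _ ≥ _ := by simpa only [mul_assoc] using hqos 1 hk
    · simpa only [mul_assoc] using hqos k hk

theorem sum_mul_le_sum_ite_one_mul (hH₁ : 0 ≤ H 1) {w : ℕ → ℝ}
    (hw : Feasible K P σ2 H r w) :
    ∑ k ∈ Icc 1 K, w k * H k ≤ ∑ k ∈ Icc 1 K, (if k = 1 then 1 else w k) * H k :=
  sum_le_sum fun k hk => by
    split_ifs with h
    · subst h
      exact mul_le_mul_of_nonneg_right (hw.1 1 hk).2 hH₁
    · exact le_rfl

theorem exists_isMaxOn_feasible (h : ∃ w, Feasible K P σ2 H r w) :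
    ∃ v, Feasible K P σ2 H r v ∧
      IsMaxOn (fun w => ∑ k ∈ Icc 1 K, w k * H k) {w | Feasible K P σ2 H r w} v := by
  let cut : (ℕ → ℝ) → ℕ → ℝ := fun w k => if k ∈ Icc 1 K then w k else 0
  have hcut : ∀ w, ∀ k ∈ Icc 1 K, cut w k = w k := fun w k hk => if_pos hk
  have hsum_cut : ∀ w, ∑ k ∈ Icc 1 K, cut w k * H k = ∑ k ∈ Icc 1 K, w k * H k := fun w =>
    sum_congr rfl fun k hk => by rw [hcut w k hk]
  let T := Set.Icc 0 (cut 1) ∩ {w | Feasible K P σ2 H r w}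
  have hcut_mem : ∀ w, Feasible K P σ2 H r w → cut w ∈ T := fun w hw => by
    refine ⟨⟨fun k => ?_, fun k => ?_⟩, (feasible_congr (hcut w)).mpr hw⟩ <;>
      dsimp only [cut, Pi.zero_apply, Pi.one_apply] <;> split_ifs with hk
    · exact (hw.1 k hk).1
    · exact le_rfl
    · exact (hw.1 k hk).2
    · exact le_rfl
  obtain ⟨w₀, hw₀⟩ := h
  have hobj : Continuous fun w : ℕ → ℝ => ∑ k ∈ Icc 1 K, w k * H k := by fun_prop
  obtain ⟨v, hvT, hvmax⟩ := (isCompact_Icc.inter_right isClosed_setOf_feasible).exists_isMaxOn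
    ⟨_, hcut_mem w₀ hw₀⟩ hobj.continuousOn
  refine ⟨v, hvT.2, fun w hw => ?_⟩
  simpa only [Set.mem_ofPred_eq, hsum_cut] using hvmax (hcut_mem w hw)

end Feasible

theorem optimal_w1_eq_one_general (K : ℕ) (P σ2 : ℝ) (hP : 0 < P)
    (H r : ℕ → ℝ) (hH : ∀ k, 0 ≤ H k) :
    (∀ w : ℕ → ℝ, Feasible K P σ2 H r w →
      Feasible K P σ2 H r (fun k => if k = 1 then 1 else w k) ∧
      (∀ k ∈ Finset.Icc 1 K, 0 ≤ (if k = 1 then (1 : ℝ) else w k) ∧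
        (if k = 1 then (1 : ℝ) else w k) ≤ 1) ∧
      (∑ k ∈ Finset.Icc 1 K, (if k = 1 then (1 : ℝ) else w k) * H k) ≥
        ∑ k ∈ Finset.Icc 1 K, w k * H k) ∧
    ((∃ w, Feasible K P σ2 H r w) →
      ∃ w, Feasible K P σ2 H r w ∧ w 1 = 1 ∧
        ∀ w', Feasible K P σ2 H r w' →
          ∑ k ∈ Finset.Icc 1 K, w' k * H k ≤ ∑ k ∈ Finset.Icc 1 K, w k * H k) := by
  refine ⟨fun w hw => ?_, fun hne => ?_⟩
  · have hw' := hw.ite_one hP.le (hH 1)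
    exact ⟨hw', hw'.1, sum_mul_le_sum_ite_one_mul (hH 1) hw⟩
  · obtain ⟨v, hv, hmax⟩ := exists_isMaxOn_feasible hne
    exact ⟨_, hv.ite_one hP.le (hH 1), if_pos rfl,
      fun w' hw' => (hmax hw').trans (sum_mul_le_sum_ite_one_mul (hH 1) hv)⟩

/-- Theorem 1, first assertion: the optimum has w₁ = 1. -/
theorem optimal_w1_eq_one (K : ℕ) (hK : 0 < K) (P σ2 : ℝ) (hP : 0 < P) (hσ : 0 < σ2)
    (H r : ℕ → ℝ) (hH : ∀ k, 0 ≤ H k) (hr : ∀ k, 0 ≤ r k) :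
    (∀ w : ℕ → ℝ, Feasible K P σ2 H r w →
      Feasible K P σ2 H r (fun k => if k = 1 then 1 else w k) ∧
      (∀ k ∈ Finset.Icc 1 K, 0 ≤ (if k = 1 then (1 : ℝ) else w k) ∧
        (if k = 1 then (1 : ℝ) else w k) ≤ 1) ∧
      (∑ k ∈ Finset.Icc 1 K, (if k = 1 then (1 : ℝ) else w k) * H k) ≥
        ∑ k ∈ Finset.Icc 1 K, w k * H k) ∧
    ((∃ w, Feasible K P σ2 H r w) →
      ∃ w, Feasible K P σ2 H r w ∧ w 1 = 1 ∧
        ∀ w', Feasible K P σ2 H r w' →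
          ∑ k ∈ Finset.Icc 1 K, w' k * H k ≤ ∑ k ∈ Finset.Icc 1 K, w k * H k) :=
  optimal_w1_eq_one_general K P σ2 hP H r hH
end
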